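/- For μ > 0 and ω_v real, the function g(Δt) = μΔt(ω_v² + μ²) - 2μω_v sin(ω_v Δt) e^{-μΔt} + (μ² - ω_v²) cos(ω_v Δt) e^{-μΔt} - μ² + ω_v² is nonnegative for all Δt ≥ 0, and g(0) = 0. -/

import Mathlib

/-!
With `ρ = ω² + μ²` and `F(t) = 1 - cos (ω t) ≥ 0`, the exponent `g` satisfies `g(0) = g'(0) = 0` and
`g'' = ρ² e^{-μt} cos (ω t)`, so `g(t) = ρ² ∫₀ᵗ (t - s) e^{-μs} cos (ω s) ds`. The kernel
`(t - s) e^{-μs}` is convex in `s` and vanishes at `s = t`; integrating by parts twice against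
`F'' = ω² cos` gives
`ω² g(t) = ρ² (e^{-μt} F(t) + ∫₀ᵗ μ e^{-μs} (2 + μ (t - s)) F(s) ds) ≥ 0`.
Rather than integrating, both layers are shown nonnegative by monotonicity: each vanishes at
`t = 0` and has a manifestly nonnegative derivative.
-/

open Real Set

theorem monotoneOn_Ici_of_hasDerivAt {f f' : ℝ → ℝ} {a : ℝ} (hf : ∀ x, HasDerivAt f (f' x) x)
    (hf' : ∀ x, a < x → 0 ≤ f' x) : MonotoneOn f (Ici a) := by
  refine monotoneOn_of_hasDerivWithinAt_nonneg (convex_Ici a)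
    (fun x _ => (hf x).continuousAt.continuousWithinAt) (fun x _ => (hf x).hasDerivWithinAt) ?_
  rw [interior_Ici]
  exact hf'

theorem nonneg_of_hasDerivAt_of_eq_zero {f f' : ℝ → ℝ} (hf : ∀ x, HasDerivAt f (f' x) x)
    (hf' : ∀ x, 0 < x → 0 ≤ f' x) (h₀ : f 0 = 0) {t : ℝ} (ht : 0 ≤ t) : 0 ≤ f t :=
  h₀ ▸ monotoneOn_Ici_of_hasDerivAt hf hf' self_mem_Ici ht ht

theorem one_sub_cos_nonneg (x : ℝ) : 0 ≤ 1 - cos x :=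
  sub_nonneg.2 (cos_le_one x)

noncomputable def acfExponent (μ ω t : ℝ) : ℝ :=
  μ * t * (ω ^ 2 + μ ^ 2) - 2 * μ * ω * sin (ω * t) * exp (-μ * t)
    + (μ ^ 2 - ω ^ 2) * cos (ω * t) * exp (-μ * t) - μ ^ 2 + ω ^ 2

/-- `dampedCosIntegral μ ω t = (ω² + μ²) ∫₀ᵗ e^{-μs} cos (ω s) ds`. -/
noncomputable def dampedCosIntegral (μ ω t : ℝ) : ℝ :=
  μ - exp (-μ * t) * (μ * cos (ω * t) - ω * sin (ω * t))

section Derivatives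

variable (μ ω t : ℝ)

theorem hasDerivAt_exp_neg_mul : HasDerivAt (fun s => exp (-μ * s)) (-μ * exp (-μ * t)) t := by
  simpa [mul_comm] using ((hasDerivAt_id t).const_mul (-μ)).exp

theorem hasDerivAt_one_sub_cos_mul :
    HasDerivAt (fun s => 1 - cos (ω * s)) (ω * sin (ω * t)) t := by
  simpa [mul_comm] using (((hasDerivAt_id t).const_mul ω).cos).const_sub 1

theorem hasDerivAt_dampedCosIntegral :
    HasDerivAt (dampedCosIntegral μ ω) ((ω ^ 2 + μ ^ 2) * exp (-μ * t) * cos (ω * t)) t := by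
  have hω := (hasDerivAt_id t).const_mul ω
  have h := ((hasDerivAt_exp_neg_mul μ t).mul
    ((hω.cos.const_mul μ).sub (hω.sin.const_mul ω))).const_sub μ
  refine h.congr_deriv ?_
  simp only [Pi.sub_apply, id, mul_one]
  ring

theorem hasDerivAt_acfExponent :
    HasDerivAt (acfExponent μ ω) ((ω ^ 2 + μ ^ 2) * dampedCosIntegral μ ω t) t := by
  have hω := (hasDerivAt_id t).const_mul ω
  have he := hasDerivAt_exp_neg_mul μ t
  have h := (((((hasDerivAt_id t).const_mul μ).mul_const (ω ^ 2 + μ ^ 2)).sub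
    ((hω.sin.const_mul (2 * μ * ω)).mul he)).add
    ((hω.cos.const_mul (μ ^ 2 - ω ^ 2)).mul he)).sub_const (μ ^ 2) |>.add_const (ω ^ 2)
  refine h.congr_deriv ?_
  simp only [dampedCosIntegral, id, mul_one]
  ring

end Derivatives

theorem acfExponent_zero (μ ω : ℝ) : acfExponent μ ω 0 = 0 := by
  simp [acfExponent]

theorem dampedCosIntegral_zero (μ ω : ℝ) : dampedCosIntegral μ ω 0 = 0 := by
  simp [dampedCosIntegral]

/-- The left side is `(ω² + μ²) μ² ∫₀ᵗ e^{-μs} (1 - cos (ω s)) ds`. -/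
theorem damped_one_sub_cos_integral_nonneg (μ ω : ℝ) {t : ℝ} (ht : 0 ≤ t) :
    0 ≤ μ * (ω ^ 2 + μ ^ 2) * (1 - exp (-μ * t)) - μ ^ 2 * dampedCosIntegral μ ω t := by
  refine nonneg_of_hasDerivAt_of_eq_zero
    (f := fun s => μ * (ω ^ 2 + μ ^ 2) * (1 - exp (-μ * s)) - μ ^ 2 * dampedCosIntegral μ ω s)
    (f' := fun s => μ ^ 2 * (ω ^ 2 + μ ^ 2) * exp (-μ * s) * (1 - cos (ω * s)))
    (fun s => ?_) (fun s _ => ?_) (by simp [dampedCosIntegral_zero]) ht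
  · refine ((((hasDerivAt_exp_neg_mul μ s).const_sub 1).const_mul (μ * (ω ^ 2 + μ ^ 2))).sub
      ((hasDerivAt_dampedCosIntegral μ ω s).const_mul (μ ^ 2))).congr_deriv ?_
    ring
  · have := one_sub_cos_nonneg (ω * s)
    positivity

theorem sq_mul_acfExponent_ge {μ : ℝ} (hμ : 0 ≤ μ) (ω : ℝ) {t : ℝ} (ht : 0 ≤ t) :
    (ω ^ 2 + μ ^ 2) ^ 2 * (exp (-μ * t) * (1 - cos (ω * t))) ≤ ω ^ 2 * acfExponent μ ω t := by
  rw [← sub_nonneg]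
  refine nonneg_of_hasDerivAt_of_eq_zero
    (f := fun s => ω ^ 2 * acfExponent μ ω s
      - (ω ^ 2 + μ ^ 2) ^ 2 * (exp (-μ * s) * (1 - cos (ω * s))))
    (f' := fun s => (ω ^ 2 + μ ^ 2) *
      (2 * μ * (ω ^ 2 + μ ^ 2) * (exp (-μ * s) * (1 - cos (ω * s)))
        + (μ * (ω ^ 2 + μ ^ 2) * (1 - exp (-μ * s)) - μ ^ 2 * dampedCosIntegral μ ω s)))
    (fun s => ?_) (fun s hs => ?_) (by simp [acfExponent_zero]) ht
  · refine (((hasDerivAt_acfExponent μ ω s).const_mul (ω ^ 2)).sub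
      (((hasDerivAt_exp_neg_mul μ s).mul (hasDerivAt_one_sub_cos_mul ω s)).const_mul
        ((ω ^ 2 + μ ^ 2) ^ 2))).congr_deriv ?_
    simp only [dampedCosIntegral]
    ring
  · have := one_sub_cos_nonneg (ω * s)
    have := damped_one_sub_cos_integral_nonneg μ ω hs.le
    positivity

theorem acfExponent_nonneg {μ : ℝ} (hμ : 0 ≤ μ) (ω : ℝ) {t : ℝ} (ht : 0 ≤ t) :
    0 ≤ acfExponent μ ω t := by
  rcases eq_or_ne ω 0 with rfl | hω
  · have h : acfExponent μ 0 t = μ ^ 2 * (exp (-μ * t) - (-μ * t + 1)) := by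
      simp [acfExponent]; ring
    rw [h]
    exact mul_nonneg (sq_nonneg μ) (sub_nonneg.2 (add_one_le_exp _))
  · have := one_sub_cos_nonneg (ω * t)
    have hF : 0 ≤ (ω ^ 2 + μ ^ 2) ^ 2 * (exp (-μ * t) * (1 - cos (ω * t))) := by positivity
    exact nonneg_of_mul_nonneg_right (hF.trans (sq_mul_acfExponent_ge hμ ω ht)) (by positivity)

theorem acf_exponent_nonneg (μ ωv : ℝ) (hμ : 0 < μ) :
    (∀ Δt : ℝ, 0 ≤ Δt →
      0 ≤ μ * Δt * (ωv ^ 2 + μ ^ 2)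
            - 2 * μ * ωv * Real.sin (ωv * Δt) * Real.exp (-μ * Δt)
            + (μ ^ 2 - ωv ^ 2) * Real.cos (ωv * Δt) * Real.exp (-μ * Δt)
            - μ ^ 2 + ωv ^ 2)
    ∧ μ * 0 * (ωv ^ 2 + μ ^ 2)
        - 2 * μ * ωv * Real.sin (ωv * 0) * Real.exp (-μ * 0)
        + (μ ^ 2 - ωv ^ 2) * Real.cos (ωv * 0) * Real.exp (-μ * 0)
        - μ ^ 2 + ωv ^ 2 = 0 :=
  ⟨fun _ ht => acfExponent_nonneg hμ.le ωv ht, acfExponent_zero μ ωv⟩
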